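/- arXiv:2502.13517 — 3 statements merged into one kernel-verified Lean document; each statement's English description precedes it below -/
import Mathlib

section
/- Let 0<p_i<∞, φ_i∈𝒢_{p_i}(𝔻), φ_i(1)=1, sup_k φ_i(2^k)=∞, i=1,2. Then m_{φ₁,p₁}(ℤ^d) = m_{φ₂,p₂}(ℤ^d) with equivalent norms if, and only if, p₁=p₂ and φ₁(2^j) ∼ φ₂(2^j) uniformly in j∈ℕ₀. -/
/-!
For `φ ∈ 𝒢_p` with `φ(1) = 1`, the indicator of `2^L ℤ^d ∩ [0, 2^(L+N))^d` has `m_{φ,p}` norm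
at least `φ(2^(L+N)) 2^(-Ld/p)` and at most `max(1, φ(2^(L+N)) 2^(-Ld/p))`: a cube `Q_{-j,m}`
contains at most `2^((j-L)d)` of its points, and the monotonicity conditions of `𝒢_p` settle the
regimes `j ≤ L`, `L ≤ j ≤ L+N` and `L+N ≤ j`. With `L = 0` the norm is `φ(2^N)`, so equivalent
norms force `φ₁ ∼ φ₂`. If moreover `p₂ < p₁`, take `J` with `φ₂(2^J)` large and `L` with
`2^(Ld/p₂) ≈ φ₂(2^J)`: the `m_{φ₂,p₂}` norm stays bounded while the `m_{φ₁,p₁}` norm is at least a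
multiple of `φ₂(2^J)^(1 - p₂/p₁)`. The converse is monotonicity of the norm in `φ`.
-/

open ENNReal Filter

noncomputable section

/-- `Q_{0,k} ⊂ Q_{-j,m}` for dyadic cubes `Q_{-j,m} = 2^j([0,1)^d + m)`. -/
def inCube (d j : ℕ) (m k : Fin d → ℤ) : Prop :=
  ∀ i, 2 ^ j * m i ≤ k i ∧ k i < 2 ^ j * (m i + 1)

/-- the local quantity `(Σ_{k : Q_{0,k} ⊂ Q_{-j,m}} |λ_k|^p)^{1/p}`, in `ℝ≥0∞`. -/
def localSum (d : ℕ) (p : ℝ) (j : ℕ) (m : Fin d → ℤ)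
    (lam : (Fin d → ℤ) → ℂ) : ℝ≥0∞ :=
  (∑' k : {k : Fin d → ℤ // inCube d j m k}, ENNReal.ofReal ‖lam k.1‖ ^ p) ^ (1 / p)

/-- quasi-norm of the generalised Morrey sequence space `m_{φ,p}(ℤ^d)`;
`φ j` stands for `φ(2^j)`. -/
def mNorm (d : ℕ) (p : ℝ) (φ : ℕ → ℝ) (lam : (Fin d → ℤ) → ℂ) : ℝ≥0∞ :=
  ⨆ (j : ℕ) (m : Fin d → ℤ),
    ENNReal.ofReal (φ j) * (2 : ℝ≥0∞) ^ (-((j : ℝ) * d) / p) * localSum d p j m lam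

def ellpNorm (d : ℕ) (p : ℝ) (lam : (Fin d → ℤ) → ℂ) : ℝ≥0∞ :=
  (∑' k : Fin d → ℤ, ENNReal.ofReal ‖lam k‖ ^ p) ^ (1 / p)

def linftyNorm (d : ℕ) (lam : (Fin d → ℤ) → ℂ) : ℝ≥0∞ :=
  ⨆ k : Fin d → ℤ, ENNReal.ofReal ‖lam k‖

/-- the class `𝒢_p(𝔻)`: `φ(2^k)` is positive, nondecreasing and
`2^{-kd/p} φ(2^k)` is nonincreasing. -/
def Gp (d : ℕ) (p : ℝ) (φ : ℕ → ℝ) : Prop :=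
  (∀ k, 0 < φ k) ∧
  ∀ j k : ℕ, j ≤ k → φ j ≤ φ k ∧ φ k ≤ φ j * 2 ^ (((k : ℝ) - j) * d / p)

def dyadicCube (d j : ℕ) (m : Fin d → ℤ) : Set (Fin d → ℤ) := {k | inCube d j m k}

theorem dyadicCube_eq_piFinset (d j : ℕ) (m : Fin d → ℤ) :
    dyadicCube d j m =
      ↑(Fintype.piFinset fun i => Finset.Ico (2 ^ j * m i) (2 ^ j * (m i + 1))) := by
  ext k
  simp [dyadicCube, inCube]

theorem encard_dyadicCube (d j : ℕ) (m : Fin d → ℤ) :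
    (dyadicCube d j m).encard = 2 ^ (j * d) := by
  rw [dyadicCube_eq_piFinset, Set.encard_coe_eq_coe_finsetCard, Fintype.card_piFinset]
  simp [Int.card_Ico, mul_add, pow_mul, Int.toNat_pow_of_nonneg]

def dilate (d L : ℕ) (t : Fin d → ℤ) : Fin d → ℤ := fun i => 2 ^ L * t i

theorem dilate_injective (d L : ℕ) : Function.Injective (dilate d L) := fun _ _ h =>
  funext fun i => mul_left_cancel₀ (pow_ne_zero L two_ne_zero) (congrFun h i)

theorem dilate_mem_dyadicCube_iff {d : ℕ} (L n : ℕ) (m t : Fin d → ℤ) :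
    dilate d L t ∈ dyadicCube d (L + n) m ↔ t ∈ dyadicCube d n m := by
  have h2L : (0 : ℤ) < 2 ^ L := by positivity
  simp only [dyadicCube, inCube, dilate, Set.mem_ofPred_eq, pow_add, mul_assoc,
    mul_le_mul_iff_right₀ h2L, mul_lt_mul_iff_right₀ h2L]

/-- The points of `2^L ℤ^d` in the box `[0, 2^(L+N))^d`. -/
def latticeBox (d L N : ℕ) : Set (Fin d → ℤ) := dilate d L '' dyadicCube d N 0

theorem encard_latticeBox (d L N : ℕ) : (latticeBox d L N).encard = 2 ^ (N * d) := by
  rw [latticeBox, (dilate_injective d L).injOn.encard_image, encard_dyadicCube]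

theorem latticeBox_subset_dyadicCube (d L N : ℕ) : latticeBox d L N ⊆ dyadicCube d (L + N) 0 := by
  rintro _ ⟨t, ht, rfl⟩
  exact (dilate_mem_dyadicCube_iff L N 0 t).2 ht

theorem encard_dyadicCube_inter_latticeBox_le_one {d j L : ℕ} (hjL : j ≤ L) (N : ℕ)
    (m : Fin d → ℤ) : (dyadicCube d j m ∩ latticeBox d L N).encard ≤ 1 := by
  rw [Set.encard_le_one_iff]
  rintro _ _ ⟨hs, t, -, rfl⟩ ⟨hu, u, -, rfl⟩
  have h2j : (2 : ℤ) ^ j ≤ 2 ^ L := pow_le_pow_right₀ one_le_two hjL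
  have h2L : (0 : ℤ) < 2 ^ L := by positivity
  have hlt : ∀ v w, dilate d L v ∈ dyadicCube d j m → dilate d L w ∈ dyadicCube d j m →
      ∀ i, v i < w i + 1 := by
    intro v w hv hw i
    have hvi := (hv i).2
    have hwi := (hw i).1
    simp only [dilate] at hvi hwi
    exact lt_of_mul_lt_mul_left (by linarith) h2L.le
  ext i
  have := hlt t u hs hu i
  have := hlt u t hu hs i
  simp only [dilate]
  congr 1
  omega

theorem encard_dyadicCube_inter_latticeBox_le (d L n N : ℕ) (m : Fin d → ℤ) :
    (dyadicCube d (L + n) m ∩ latticeBox d L N).encard ≤ 2 ^ (n * d) := by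
  calc (dyadicCube d (L + n) m ∩ latticeBox d L N).encard
      ≤ (dilate d L '' dyadicCube d n m).encard := by
        refine Set.encard_le_encard ?_
        rintro _ ⟨hs, t, -, rfl⟩
        exact ⟨t, (dilate_mem_dyadicCube_iff L n m t).1 hs, rfl⟩
    _ ≤ 2 ^ (n * d) := (Set.encard_image_le _ _).trans (encard_dyadicCube d n m).le

theorem localSum_indicator_one {d : ℕ} {p : ℝ} (hp : 0 < p) (j : ℕ) (m : Fin d → ℤ)
    (S : Set (Fin d → ℤ)) :
    localSum d p j m (S.indicator 1) = ((dyadicCube d j m ∩ S).encard : ℝ≥0∞) ^ (1 / p) := by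
  have hterm (k : Fin d → ℤ) :
      ENNReal.ofReal ‖S.indicator (1 : (Fin d → ℤ) → ℂ) k‖ ^ p = S.indicator 1 k := by
    by_cases hk : k ∈ S <;> simp [hk, hp]
  refine congrArg (· ^ (1 / p)) ?_
  calc ∑' k : dyadicCube d j m, ENNReal.ofReal ‖S.indicator (1 : (Fin d → ℤ) → ℂ) k‖ ^ p
      = ∑' k, (dyadicCube d j m).indicator (S.indicator 1) k := by
        simp only [hterm]; exact tsum_subtype _ _
    _ = ∑' _ : ↥(dyadicCube d j m ∩ S), 1 := by
        rw [Set.indicator_indicator, tsum_subtype _ fun _ => (1 : ℝ≥0∞)]; rfl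
    _ = (dyadicCube d j m ∩ S).encard := ENNReal.tsum_set_one _

theorem ofReal_mul_two_rpow (a x : ℝ) :
    ENNReal.ofReal (a * 2 ^ x) = ENNReal.ofReal a * 2 ^ x := by
  rw [ENNReal.ofReal_mul' (by positivity), ← ENNReal.ofReal_rpow_of_pos two_pos, ENNReal.ofReal_ofNat]

theorem two_pow_rpow_one_div (k : ℕ) (p : ℝ) :
    ((2 : ℝ≥0∞) ^ k) ^ (1 / p) = 2 ^ ((k : ℝ) / p) := by
  rw [← ENNReal.rpow_natCast, ← ENNReal.rpow_mul, mul_one_div]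

theorem toENNReal_rpow_one_div_le {c : ℕ∞} {k : ℕ} (hc : c ≤ 2 ^ k) {p : ℝ} (hp : 0 < p) :
    (c : ℝ≥0∞) ^ (1 / p) ≤ 2 ^ ((k : ℝ) / p) :=
  (ENNReal.rpow_le_rpow (by exact_mod_cast hc) (by positivity)).trans_eq (two_pow_rpow_one_div k p)

theorem two_rpow_neg_add_mul (L n d : ℕ) (p : ℝ) :
    (2 : ℝ≥0∞) ^ (-(((L + n : ℕ) : ℝ) * d) / p) * 2 ^ (((n * d : ℕ) : ℝ) / p) =
      2 ^ (-((L : ℝ) * d) / p) := by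
  rw [← ENNReal.rpow_add _ _ two_ne_zero ENNReal.ofNat_ne_top]
  congr 1
  push_cast
  ring

section Gp

variable {d : ℕ} {p : ℝ} {φ : ℕ → ℝ}

theorem Gp.monotone (h : Gp d p φ) : Monotone φ := fun _ _ hjk => (h.2 _ _ hjk).1

theorem Gp.le_two_rpow (h : Gp d p φ) (hφ0 : φ 0 = 1) (k : ℕ) : φ k ≤ 2 ^ ((k : ℝ) * d / p) := by
  simpa [hφ0] using (h.2 0 k k.zero_le).2

theorem Gp.antitone_ofReal_mul_two_rpow (h : Gp d p φ) :
    Antitone fun k : ℕ => ENNReal.ofReal (φ k) * (2 : ℝ≥0∞) ^ (-((k : ℝ) * d) / p) := by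
  intro j k hjk
  calc ENNReal.ofReal (φ k) * (2 : ℝ≥0∞) ^ (-((k : ℝ) * d) / p)
      ≤ ENNReal.ofReal (φ j) * 2 ^ (((k : ℝ) - j) * d / p) * 2 ^ (-((k : ℝ) * d) / p) := by
        rw [← ofReal_mul_two_rpow (φ j)]
        exact mul_le_mul_left (ENNReal.ofReal_le_ofReal (h.2 j k hjk).2) _
    _ = ENNReal.ofReal (φ j) * 2 ^ (-((j : ℝ) * d) / p) := by
        rw [mul_assoc, ← ENNReal.rpow_add _ _ two_ne_zero ENNReal.ofNat_ne_top]
        congr 2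
        ring

theorem Gp.ofReal_mul_two_rpow_le_one (h : Gp d p φ) (hφ0 : φ 0 = 1) (k : ℕ) :
    ENNReal.ofReal (φ k) * (2 : ℝ≥0∞) ^ (-((k : ℝ) * d) / p) ≤ 1 :=
  (h.antitone_ofReal_mul_two_rpow k.zero_le).trans_eq (by simp [hφ0])

end Gp

def latticeIndicator (d L N : ℕ) : (Fin d → ℤ) → ℂ := (latticeBox d L N).indicator 1

section latticeIndicator

variable {d : ℕ} {p : ℝ} {φ : ℕ → ℝ}

theorem ofReal_mul_le_mNorm_latticeIndicator (hp : 0 < p) (L N : ℕ) :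
    ENNReal.ofReal (φ (L + N) * 2 ^ (-((L : ℝ) * d) / p)) ≤
      mNorm d p φ (latticeIndicator d L N) := by
  have hlocal : localSum d p (L + N) 0 (latticeIndicator d L N) = 2 ^ (((N * d : ℕ) : ℝ) / p) := by
    rw [latticeIndicator, localSum_indicator_one hp,
      Set.inter_eq_right.2 (latticeBox_subset_dyadicCube d L N), encard_latticeBox]
    exact_mod_cast two_pow_rpow_one_div (N * d) p
  calc ENNReal.ofReal (φ (L + N) * 2 ^ (-((L : ℝ) * d) / p))
      = ENNReal.ofReal (φ (L + N)) * 2 ^ (-(((L + N : ℕ) : ℝ) * d) / p) *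
          localSum d p (L + N) 0 (latticeIndicator d L N) := by
        rw [hlocal, mul_assoc, two_rpow_neg_add_mul, ofReal_mul_two_rpow]
    _ ≤ mNorm d p φ (latticeIndicator d L N) :=
        le_iSup₂ (f := fun j m => ENNReal.ofReal (φ j) * (2 : ℝ≥0∞) ^ (-((j : ℝ) * d) / p) *
          localSum d p j m (latticeIndicator d L N)) (L + N) 0

theorem mul_localSum_latticeIndicator_add_le (hp : 0 < p) (h : Gp d p φ) (L n N : ℕ)
    (m : Fin d → ℤ) :
    ENNReal.ofReal (φ (L + n)) * 2 ^ (-(((L + n : ℕ) : ℝ) * d) / p) *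
        localSum d p (L + n) m (latticeIndicator d L N) ≤
      ENNReal.ofReal (φ (L + N)) * 2 ^ (-((L : ℝ) * d) / p) := by
  rw [latticeIndicator, localSum_indicator_one hp]
  rcases le_total n N with hnN | hNn
  · calc ENNReal.ofReal (φ (L + n)) * 2 ^ (-(((L + n : ℕ) : ℝ) * d) / p) *
          ((dyadicCube d (L + n) m ∩ latticeBox d L N).encard : ℝ≥0∞) ^ (1 / p)
        ≤ ENNReal.ofReal (φ (L + n)) * 2 ^ (-(((L + n : ℕ) : ℝ) * d) / p) *
            2 ^ (((n * d : ℕ) : ℝ) / p) := by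
          gcongr
          exact toENNReal_rpow_one_div_le (encard_dyadicCube_inter_latticeBox_le d L n N m) hp
      _ = ENNReal.ofReal (φ (L + n)) * 2 ^ (-((L : ℝ) * d) / p) := by
          rw [mul_assoc, two_rpow_neg_add_mul]
      _ ≤ ENNReal.ofReal (φ (L + N)) * 2 ^ (-((L : ℝ) * d) / p) := by
          gcongr
          exact h.monotone (by omega)
  · calc ENNReal.ofReal (φ (L + n)) * 2 ^ (-(((L + n : ℕ) : ℝ) * d) / p) *
          ((dyadicCube d (L + n) m ∩ latticeBox d L N).encard : ℝ≥0∞) ^ (1 / p)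
        ≤ ENNReal.ofReal (φ (L + n)) * 2 ^ (-(((L + n : ℕ) : ℝ) * d) / p) *
            2 ^ (((N * d : ℕ) : ℝ) / p) := by
          gcongr
          refine toENNReal_rpow_one_div_le ?_ hp
          exact (Set.encard_le_encard Set.inter_subset_right).trans (encard_latticeBox d L N).le
      _ ≤ ENNReal.ofReal (φ (L + N)) * 2 ^ (-(((L + N : ℕ) : ℝ) * d) / p) *
            2 ^ (((N * d : ℕ) : ℝ) / p) :=
          mul_le_mul_left (h.antitone_ofReal_mul_two_rpow (by omega)) _
      _ = ENNReal.ofReal (φ (L + N)) * 2 ^ (-((L : ℝ) * d) / p) := by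
          rw [mul_assoc, two_rpow_neg_add_mul]

theorem mul_localSum_latticeIndicator_le (hp : 0 < p) (h : Gp d p φ) (hφ0 : φ 0 = 1)
    (L N j : ℕ) (m : Fin d → ℤ) :
    ENNReal.ofReal (φ j) * 2 ^ (-((j : ℝ) * d) / p) * localSum d p j m (latticeIndicator d L N) ≤
      max 1 (ENNReal.ofReal (φ (L + N)) * 2 ^ (-((L : ℝ) * d) / p)) := by
  rcases le_total j L with hjL | hLj
  · refine le_max_of_le_left ?_
    rw [latticeIndicator, localSum_indicator_one hp]
    calc ENNReal.ofReal (φ j) * 2 ^ (-((j : ℝ) * d) / p) *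
          ((dyadicCube d j m ∩ latticeBox d L N).encard : ℝ≥0∞) ^ (1 / p)
        ≤ ENNReal.ofReal (φ j) * 2 ^ (-((j : ℝ) * d) / p) * 1 := by
          gcongr
          exact ENNReal.rpow_le_one (by exact_mod_cast
            encard_dyadicCube_inter_latticeBox_le_one hjL N m) (by positivity)
      _ ≤ 1 := (mul_one _).trans_le (h.ofReal_mul_two_rpow_le_one hφ0 j)
  · obtain ⟨n, rfl⟩ := Nat.exists_eq_add_of_le hLj
    exact le_max_of_le_right (mul_localSum_latticeIndicator_add_le hp h L n N m)

theorem mNorm_latticeIndicator_le (hp : 0 < p) (h : Gp d p φ) (hφ0 : φ 0 = 1) (L N : ℕ) :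
    mNorm d p φ (latticeIndicator d L N) ≤
      ENNReal.ofReal (max 1 (φ (L + N) * 2 ^ (-((L : ℝ) * d) / p))) := by
  rw [ENNReal.ofReal_max, ENNReal.ofReal_one, ofReal_mul_two_rpow]
  exact iSup₂_le (mul_localSum_latticeIndicator_le hp h hφ0 L N)

theorem mNorm_latticeIndicator_zero (hp : 0 < p) (h : Gp d p φ) (hφ0 : φ 0 = 1) (N : ℕ) :
    mNorm d p φ (latticeIndicator d 0 N) = ENNReal.ofReal (φ N) := by
  have hN : 1 ≤ φ N := hφ0 ▸ h.monotone N.zero_le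
  refine le_antisymm ?_ ?_
  · simpa [hN] using mNorm_latticeIndicator_le hp h hφ0 0 N
  · simpa using ofReal_mul_le_mNorm_latticeIndicator (φ := φ) (d := d) hp 0 N

end latticeIndicator

theorem mNorm_le_ofReal_mul {d : ℕ} {p C : ℝ} {φ ψ : ℕ → ℝ} (hψ : ∀ j, 0 ≤ ψ j)
    (h : ∀ j, φ j ≤ C * ψ j) (lam : (Fin d → ℤ) → ℂ) :
    mNorm d p φ lam ≤ ENNReal.ofReal C * mNorm d p ψ lam := by
  refine iSup₂_le fun j m => ?_
  calc ENNReal.ofReal (φ j) * 2 ^ (-((j : ℝ) * d) / p) * localSum d p j m lam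
      ≤ ENNReal.ofReal C * (ENNReal.ofReal (ψ j) * 2 ^ (-((j : ℝ) * d) / p) *
          localSum d p j m lam) := by
        rw [← mul_assoc, ← mul_assoc, ← ENNReal.ofReal_mul' (hψ j)]
        gcongr
        exact h j
    _ ≤ ENNReal.ofReal C * mNorm d p ψ lam := by
        gcongr
        exact le_iSup₂ (f := fun j m => ENNReal.ofReal (ψ j) * (2 : ℝ≥0∞) ^ (-((j : ℝ) * d) / p) *
          localSum d p j m lam) j m

theorem ofReal_mul_mNorm_le {d : ℕ} {p c : ℝ} {φ ψ : ℕ → ℝ} (hc : 0 < c) (hφ : ∀ j, 0 ≤ φ j)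
    (h : ∀ j, c * ψ j ≤ φ j) (lam : (Fin d → ℤ) → ℂ) :
    ENNReal.ofReal c * mNorm d p ψ lam ≤ mNorm d p φ lam := by
  have hψ : mNorm d p ψ lam ≤ ENNReal.ofReal c⁻¹ * mNorm d p φ lam :=
    mNorm_le_ofReal_mul hφ (fun j => by rw [← div_eq_inv_mul, le_div_iff₀' hc]; exact h j) lam
  calc ENNReal.ofReal c * mNorm d p ψ lam
      ≤ ENNReal.ofReal c * (ENNReal.ofReal c⁻¹ * mNorm d p φ lam) := by gcongr
    _ = mNorm d p φ lam := by
        rw [← mul_assoc, ← ENNReal.ofReal_mul hc.le, mul_inv_cancel₀ hc.ne', ENNReal.ofReal_one,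
          one_mul]

theorem mul_two_rpow_le_of_mNorm_le {d : ℕ} {p q : ℝ} (hp : 0 < p) (hq : 0 < q)
    {φ ψ : ℕ → ℝ} (hψ : Gp d q ψ) (hψ0 : ψ 0 = 1) {κ : ℝ≥0∞} (hκ : κ ≠ ⊤)
    (h : ∀ lam, mNorm d p φ lam ≤ κ * mNorm d q ψ lam) (L N : ℕ) :
    φ (L + N) * 2 ^ (-((L : ℝ) * d) / p) ≤
      κ.toReal * max 1 (ψ (L + N) * 2 ^ (-((L : ℝ) * d) / q)) := by
  have := (ofReal_mul_le_mNorm_latticeIndicator hp L N).trans <| (h _).trans <|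
    mul_le_mul_right (mNorm_latticeIndicator_le hq hψ hψ0 L N) κ
  rwa [← ENNReal.ofReal_toReal hκ, ← ENNReal.ofReal_mul ENNReal.toReal_nonneg,
    ENNReal.ofReal_le_ofReal_iff (by positivity)] at this

theorem mul_rpow_le_of_mNorm_le {d : ℕ} (hd : 0 < d) {p q : ℝ} (hp : 0 < p) (hq : 0 < q)
    {φ ψ : ℕ → ℝ} (hψ : Gp d q ψ) (hψ0 : ψ 0 = 1) {γ : ℝ} (hγ : 0 < γ)
    (hγψ : ∀ k, γ * ψ k ≤ φ k) {κ : ℝ≥0∞} (hκ : κ ≠ ⊤)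
    (h : ∀ lam, mNorm d p φ lam ≤ κ * mNorm d q ψ lam) {J : ℕ} (hJ : 1 ≤ ψ J) :
    γ * ψ J ^ (1 - q / p) ≤ κ.toReal * 2 ^ ((d : ℝ) / q) := by
  set y : ℝ := 2 ^ ((d : ℝ) / q)
  have hy : 1 < y := Real.one_lt_rpow one_lt_two (by positivity)
  have hy_pow (L : ℕ) : y ^ L = 2 ^ ((L : ℝ) * d / q) := by
    rw [← Real.rpow_natCast, ← Real.rpow_mul zero_le_two]
    ring_nf
  obtain ⟨L, hyL, hLy⟩ := exists_nat_pow_near hJ hy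
  have hLJ : L ≤ J := (pow_le_pow_iff_right₀ hy).1
    (hyL.trans ((hψ.le_two_rpow hψ0 J).trans_eq (hy_pow J).symm))
  obtain ⟨N, rfl⟩ := Nat.exists_eq_add_of_le hLJ
  have hyL_pos : 0 < y ^ L := by positivity
  have hψ_upper : ψ (L + N) * 2 ^ (-((L : ℝ) * d) / q) ≤ y := by
    rw [neg_div, Real.rpow_neg zero_le_two, ← hy_pow, ← div_eq_mul_inv, div_le_iff₀ hyL_pos]
    linarith [pow_succ' y L]
  have hψ_pos : 0 < ψ (L + N) := hψ.1 _
  have hφ_nonneg : 0 ≤ φ (L + N) := (mul_pos hγ hψ_pos).le.trans (hγψ _)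
  have hexp : -(q / p) ≤ 0 := neg_nonpos.2 (div_pos hq hp).le
  calc γ * ψ (L + N) ^ (1 - q / p) = γ * ψ (L + N) * ψ (L + N) ^ (-(q / p)) := by
        rw [sub_eq_add_neg, Real.rpow_add hψ_pos, Real.rpow_one, mul_assoc]
    _ ≤ φ (L + N) * ψ (L + N) ^ (-(q / p)) := by
        gcongr
        exact hγψ _
    _ ≤ φ (L + N) * (y ^ L) ^ (-(q / p)) :=
        mul_le_mul_of_nonneg_left (Real.rpow_le_rpow_of_nonpos hyL_pos hyL hexp) hφ_nonneg
    _ = φ (L + N) * 2 ^ (-((L : ℝ) * d) / p) := by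
        rw [hy_pow, ← Real.rpow_mul zero_le_two]
        congr 2
        field_simp
    _ ≤ κ.toReal * max 1 (ψ (L + N) * 2 ^ (-((L : ℝ) * d) / q)) :=
        mul_two_rpow_le_of_mNorm_le hp hq hψ hψ0 hκ h L N
    _ ≤ κ.toReal * y := by
        gcongr
        exact max_le hy.le hψ_upper

theorem le_of_mNorm_le_mul_mNorm {d : ℕ} (hd : 0 < d) {p q : ℝ} (hp : 0 < p) (hq : 0 < q)
    {φ ψ : ℕ → ℝ} (hψ : Gp d q ψ) (hψ0 : ψ 0 = 1) (hunb : ∀ C : ℝ, ∃ k, C < ψ k)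
    {γ : ℝ} (hγ : 0 < γ) (hγψ : ∀ k, γ * ψ k ≤ φ k) {κ : ℝ≥0∞} (hκ : κ ≠ ⊤)
    (h : ∀ lam, mNorm d p φ lam ≤ κ * mNorm d q ψ lam) : p ≤ q := by
  by_contra! hqp
  set B : ℝ := κ.toReal * 2 ^ ((d : ℝ) / q)
  have hθ : 0 < 1 - q / p := sub_pos.2 ((div_lt_one hp).2 hqp)
  obtain ⟨J, hJ⟩ := hunb (max 1 ((B / γ) ^ (1 - q / p)⁻¹))
  have hJ_large : B / γ < ψ J ^ (1 - q / p) := by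
    have := Real.rpow_lt_rpow (by positivity) ((le_max_right _ _).trans_lt hJ) hθ
    rwa [Real.rpow_inv_rpow (by positivity) hθ.ne'] at this
  have := mul_rpow_le_of_mNorm_le hd hp hq hψ hψ0 hγ hγψ hκ h ((le_max_left _ _).trans hJ.le)
  rw [div_lt_iff₀ hγ] at hJ_large
  linarith

theorem stmt_14 (d : ℕ) (hd : 0 < d) (p₁ p₂ : ℝ) (hp₁ : 0 < p₁) (hp₂ : 0 < p₂)
    (φ₁ φ₂ : ℕ → ℝ) (hGp₁ : Gp d p₁ φ₁) (hGp₂ : Gp d p₂ φ₂)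
    (hφ₁1 : φ₁ 0 = 1) (hφ₂1 : φ₂ 0 = 1)
    (hunb₁ : ∀ C : ℝ, ∃ k, C < φ₁ k) (hunb₂ : ∀ C : ℝ, ∃ k, C < φ₂ k) :
    (∃ c C : ℝ≥0∞, 0 < c ∧ C < ⊤ ∧ ∀ lam : (Fin d → ℤ) → ℂ,
        c * mNorm d p₂ φ₂ lam ≤ mNorm d p₁ φ₁ lam ∧
        mNorm d p₁ φ₁ lam ≤ C * mNorm d p₂ φ₂ lam) ↔
    (p₁ = p₂ ∧ ∃ c C : ℝ, 0 < c ∧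
        ∀ j : ℕ, c * φ₂ j ≤ φ₁ j ∧ φ₁ j ≤ C * φ₂ j) := by
  constructor
  · rintro ⟨c, C, hc, hC, hnorm⟩
    have hφ (N : ℕ) : c * ENNReal.ofReal (φ₂ N) ≤ ENNReal.ofReal (φ₁ N) ∧
        ENNReal.ofReal (φ₁ N) ≤ C * ENNReal.ofReal (φ₂ N) := by
      simpa only [mNorm_latticeIndicator_zero hp₁ hGp₁ hφ₁1,
        mNorm_latticeIndicator_zero hp₂ hGp₂ hφ₂1] using hnorm (latticeIndicator d 0 N)
    have hc_top : c ≠ ⊤ := by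
      simpa [hφ₁1, hφ₂1] using ne_top_of_le_ne_top ENNReal.ofReal_ne_top (hφ 0).1
    have hlow (N : ℕ) : c.toReal * φ₂ N ≤ φ₁ N := by
      simpa [ENNReal.toReal_ofReal (hGp₂.1 N).le] using
        ENNReal.toReal_le_of_le_ofReal (hGp₁.1 N).le (hφ N).1
    have hup (N : ℕ) : φ₁ N ≤ C.toReal * φ₂ N := by
      simpa [ENNReal.toReal_ofReal (hGp₂.1 N).le] using
        (ENNReal.ofReal_le_iff_le_toReal (ENNReal.mul_ne_top hC.ne ENNReal.ofReal_ne_top)).1 (hφ N).2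
    have hC_pos : 0 < C.toReal := by simpa [hφ₁1, hφ₂1] using (hGp₁.1 0).trans_le (hup 0)
    refine ⟨le_antisymm ?_ ?_, c.toReal, C.toReal, ENNReal.toReal_pos hc.ne' hc_top,
      fun N => ⟨hlow N, hup N⟩⟩
    · exact le_of_mNorm_le_mul_mNorm hd hp₁ hp₂ hGp₂ hφ₂1 hunb₂
        (ENNReal.toReal_pos hc.ne' hc_top) hlow hC.ne fun lam => (hnorm lam).2
    · exact le_of_mNorm_le_mul_mNorm hd hp₂ hp₁ hGp₁ hφ₁1 hunb₁ (inv_pos.2 hC_pos)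
        (fun N => by rw [inv_mul_le_iff₀ hC_pos]; exact hup N) (ENNReal.inv_ne_top.2 hc.ne')
        fun lam => (ENNReal.mul_le_iff_le_inv hc.ne' hc_top).1 (hnorm lam).1
  · rintro ⟨rfl, c, C, hc, hφ⟩
    exact ⟨ENNReal.ofReal c, ENNReal.ofReal C, ENNReal.ofReal_pos.2 hc, ENNReal.ofReal_lt_top,
      fun lam => ⟨ofReal_mul_mNorm_le hc (fun j => (hGp₁.1 j).le) (fun j => (hφ j).1) lam,
        mNorm_le_ofReal_mul (fun j => (hGp₂.1 j).le) (fun j => (hφ j).2) lam⟩⟩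
end
end

section
/- Let 1≤p<∞ and φ∈𝒢_p(𝔻) with lim_{k→∞} 2^{−kd/p}φ(2^k)=0. For every λ∈ℓ_p(ℤ^d), the supremum defining ‖λ|m_{φ,p}‖ is attained: there exists a dyadic cube Q_λ = Q_{−j₀,m₀} with ‖λ|m_{φ,p}‖ = φ(2^{j₀}) 2^{−j₀ d/p} (Σ_{m: Q_{0,m}⊂Q_λ} |λ_m|^p)^{1/p}. -/
open ENNReal Filter

noncomputable section

/-!
For each `t > 0` only finitely many dyadic cubes have a term
`φ(2^j) 2^{-jd/p} localSum_{j,m}` above `t`: the weights tend to `0` while the local sums stay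
below `‖λ‖_p`, which leaves finitely many levels `j`, and on each level the cubes are disjoint,
so `Σ_m localSum_{j,m}^p ≤ ‖λ‖_p^p < ∞`. A supremum of such a family is a maximum.
-/

theorem exists_apply_eq_iSup_of_finite_setOf_lt {α ι : Type*} [CompleteLinearOrder α]
    [DenselyOrdered α] [Nonempty ι] (f : ι → α) (hf : ∀ t, ⊥ < t → {i | t < f i}.Finite) :
    ∃ i, f i = ⨆ i, f i := by
  rcases eq_or_ne (⨆ i, f i) ⊥ with hbot | hbot
  · obtain ⟨i⟩ := ‹Nonempty ι›
    exact ⟨i, by rw [hbot]; exact iSup_eq_bot.1 hbot i⟩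
  obtain ⟨t, ht, htsup⟩ := exists_between (bot_lt_iff_ne_bot.2 hbot)
  obtain ⟨i, hti⟩ := lt_iSup_iff.1 htsup
  obtain ⟨i₀, hti₀, hmax⟩ := Set.exists_max_image _ f (hf t ht) ⟨i, hti⟩
  refine ⟨i₀, le_antisymm (le_iSup f i₀) (iSup_le fun i => ?_)⟩
  by_cases hi : t < f i
  · exact hmax i hi
  · exact (not_lt.1 hi).trans hti₀.le

lemma inCube_unique {d j : ℕ} {m m' k : Fin d → ℤ}
    (h : inCube d j m k) (h' : inCube d j m' k) : m = m' := by
  funext i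
  obtain ⟨h1, h2⟩ := h i
  obtain ⟨h1', h2'⟩ := h' i
  have hpow : (0 : ℤ) ≤ 2 ^ j := by positivity
  have e1 : m i < m' i + 1 := lt_of_mul_lt_mul_left (h1.trans_lt h2') hpow
  have e2 : m' i < m i + 1 := lt_of_mul_lt_mul_left (h1'.trans_lt h2) hpow
  omega

lemma tsum_tsum_inCube_le (d j : ℕ) (g : (Fin d → ℤ) → ℝ≥0∞) :
    ∑' m, ∑' k : {k : Fin d → ℤ // inCube d j m k}, g k.1 ≤ ∑' k, g k := by
  rw [← ENNReal.tsum_sigma'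
    (f := fun q : Σ m : Fin d → ℤ, {k : Fin d → ℤ // inCube d j m k} => g q.2.1)]
  refine ENNReal.tsum_comp_le_tsum_of_injective
    (f := fun q : Σ m : Fin d → ℤ, {k : Fin d → ℤ // inCube d j m k} => q.2.1) ?_ g
  rintro ⟨m, k, hk⟩ ⟨m', k', hk'⟩ (rfl : k = k')
  obtain rfl := inCube_unique hk hk'
  rfl

section LocalSums

variable {d : ℕ} {p : ℝ} {lam : (Fin d → ℤ) → ℂ}

lemma localSum_le_ellpNorm (hp : 0 ≤ p) (j : ℕ) (m : Fin d → ℤ) :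
    localSum d p j m lam ≤ ellpNorm d p lam :=
  ENNReal.rpow_le_rpow (ENNReal.tsum_comp_le_tsum_of_injective Subtype.val_injective _)
    (one_div_nonneg.2 hp)

lemma tsum_localSum_rpow_le (hp : 0 < p) (j : ℕ) :
    ∑' m, localSum d p j m lam ^ p ≤ ellpNorm d p lam ^ p := by
  simp only [localSum, ellpNorm, one_div, ENNReal.rpow_inv_rpow hp.ne']
  exact tsum_tsum_inCube_le d j _

lemma finite_setOf_lt_localSum (hp : 0 < p) (hlam : ellpNorm d p lam ≠ ⊤) (j : ℕ)
    {s : ℝ≥0∞} (hs : s ≠ 0) : {m | s < localSum d p j m lam}.Finite := by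
  have hsum : ∑' m, localSum d p j m lam ^ p ≠ ⊤ :=
    ne_top_of_le_ne_top (ENNReal.rpow_ne_top_of_nonneg hp.le hlam) (tsum_localSum_rpow_le hp j)
  refine (ENNReal.finite_const_le_of_tsum_ne_top hsum ?_).subset fun m hm =>
    ENNReal.rpow_le_rpow (le_of_lt hm) hp.le
  simp [ENNReal.rpow_eq_zero_iff, hs, hp.not_gt]

end LocalSums

section MorreyTerms

variable {d : ℕ} {p : ℝ} {φ : ℕ → ℝ} {lam : (Fin d → ℤ) → ℂ}

def morreyWeight (d : ℕ) (p : ℝ) (φ : ℕ → ℝ) (j : ℕ) : ℝ≥0∞ :=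
  ENNReal.ofReal (φ j) * (2 : ℝ≥0∞) ^ (-((j : ℝ) * d) / p)

def morreyTerm (d : ℕ) (p : ℝ) (φ : ℕ → ℝ) (lam : (Fin d → ℤ) → ℂ)
    (q : ℕ × (Fin d → ℤ)) : ℝ≥0∞ :=
  morreyWeight d p φ q.1 * localSum d p q.1 q.2 lam

lemma mNorm_eq_iSup_morreyTerm : mNorm d p φ lam = ⨆ q, morreyTerm d p φ lam q :=
  (iSup_prod (f := morreyTerm d p φ lam)).symm

lemma morreyWeight_ne_top (d : ℕ) (p : ℝ) (φ : ℕ → ℝ) (j : ℕ) : morreyWeight d p φ j ≠ ⊤ :=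
  ENNReal.mul_ne_top ofReal_ne_top (ENNReal.rpow_ne_top_of_ne_zero two_ne_zero ofNat_ne_top)

lemma tendsto_morreyWeight
    (hlim : Tendsto (fun k : ℕ => φ k * (2 : ℝ) ^ (-((k : ℝ) * d) / p)) atTop (nhds 0)) :
    Tendsto (morreyWeight d p φ) atTop (nhds 0) := by
  have h := ENNReal.tendsto_ofReal hlim
  simp only [ENNReal.ofReal_mul' (Real.rpow_nonneg zero_le_two _),
    ← ENNReal.ofReal_rpow_of_pos two_pos, ENNReal.ofReal_ofNat, ENNReal.ofReal_zero] at h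
  exact h

lemma finite_setOf_lt_morreyTerm (hp : 0 < p)
    (hlim : Tendsto (fun k : ℕ => φ k * (2 : ℝ) ^ (-((k : ℝ) * d) / p)) atTop (nhds 0))
    (hlam : ellpNorm d p lam ≠ ⊤) {t : ℝ≥0∞} (ht : t ≠ 0) :
    {q | t < morreyTerm d p φ lam q}.Finite := by
  have htail := ENNReal.Tendsto.mul_const (tendsto_morreyWeight hlim) (Or.inr hlam)
  rw [zero_mul] at htail
  obtain ⟨J, hJ⟩ := eventually_atTop.1 (htail.eventually_lt_const (pos_iff_ne_zero.2 ht))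
  refine ((Finset.range J).finite_toSet.biUnion fun j _ =>
    (finite_setOf_lt_localSum hp hlam j (ENNReal.div_ne_zero.2
      ⟨ht, morreyWeight_ne_top d p φ j⟩)).image (Prod.mk j)).subset ?_
  rintro ⟨j, m⟩ (hq : t < morreyWeight d p φ j * localSum d p j m lam)
  have hj : j < J := by
    by_contra! hj
    exact (hq.trans_le (mul_le_mul_right (localSum_le_ellpNorm hp.le j m) _)).not_gt (hJ j hj)
  exact Set.mem_biUnion (Finset.mem_range.2 hj) ⟨m, ENNReal.div_lt_of_lt_mul' hq, rfl⟩

end MorreyTerms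

theorem stmt_17_general (d : ℕ) (p : ℝ) (hp : 1 ≤ p)
    (φ : ℕ → ℝ)
    (hlim : Tendsto (fun k : ℕ => φ k * (2 : ℝ) ^ (-((k : ℝ) * d) / p))
      atTop (nhds 0)) :
    ∀ lam : (Fin d → ℤ) → ℂ, ellpNorm d p lam < ⊤ →
      ∃ (j₀ : ℕ) (m₀ : Fin d → ℤ),
        mNorm d p φ lam = ENNReal.ofReal (φ j₀) *
          (2 : ℝ≥0∞) ^ (-((j₀ : ℝ) * d) / p) * localSum d p j₀ m₀ lam := by
  intro lam hlam
  obtain ⟨⟨j₀, m₀⟩, hmax⟩ := exists_apply_eq_iSup_of_finite_setOf_lt (morreyTerm d p φ lam)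
    fun t ht => finite_setOf_lt_morreyTerm (by linarith) hlim hlam.ne ht.ne'
  exact ⟨j₀, m₀, mNorm_eq_iSup_morreyTerm.trans hmax.symm⟩

theorem stmt_17 (d : ℕ) (hd : 0 < d) (p : ℝ) (hp : 1 ≤ p)
    (φ : ℕ → ℝ) (hGp : Gp d p φ)
    (hlim : Tendsto (fun k : ℕ => φ k * (2 : ℝ) ^ (-((k : ℝ) * d) / p))
      atTop (nhds 0)) :
    ∀ lam : (Fin d → ℤ) → ℂ, ellpNorm d p lam < ⊤ →
      ∃ (j₀ : ℕ) (m₀ : Fin d → ℤ),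
        mNorm d p φ lam = ENNReal.ofReal (φ j₀) *
          (2 : ℝ≥0∞) ^ (-((j₀ : ℝ) * d) / p) * localSum d p j₀ m₀ lam :=
  stmt_17_general d p hp φ hlim
end
end

section
/- Let 0<p_i<∞ and φ_i∈𝒢_{p_i}(𝔻) with φ_i(1)=1, sup_k φ_i(2^k)=∞, i=1,2, and suppose lim_{ν→∞} 2^{−νd/p_i}φ_i(2^ν)=0 for i=1,2, with the embedding m_{φ₁,p₁}(ℤ^d) ↪ m_{φ₂,p₂}(ℤ^d) continuous. Then both spaces contain a common subspace on which the two norms coincide with the ℓ_∞ norm of an ℓ_∞(ℕ) sequence (an isometric copy of ℓ_∞(ℕ)); consequently the embedding is not strictly singular. -/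
open ENNReal Filter

noncomputable section

/-! Choose scales `J₀ < J₁ < ⋯` with `φᵢ(2^Jₙ) 2^(-Jₙ d/pᵢ) (n+1)^(1/pᵢ) ≤ 1` for `i = 1, 2`,
possible because these quantities tend to `0`, and embed `ℓ_∞` by placing `μₙ` at the lattice
point `(2^Jₙ - 1, 0, …, 0)`. A dyadic cube `Q_{-j,m}` with `m₀ ≠ 0` contains at most one of these
points (`2^Jₙ` then lies in `(2^j m₀, 2^(j+1) m₀]`), and one with `m₀ = 0` only those with
`Jₙ ≤ j`, at most `n + 1` of them for the largest such `n`. As `2^(-jd/p) φ(2^j)` is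
nonincreasing and equals `1` at `j = 0`, every term of the Morrey norm is then at most
`sup |μₙ|`, while the cubes of side `1` give the reverse inequality. The image of the finitely
supported sequences is an infinite-dimensional subspace on which both norms agree, so the
embedding is not strictly singular. -/

section Morrey

variable {d : ℕ} {p : ℝ} {φ : ℕ → ℝ}

lemma Gp.mul_rpow_le (hGp : Gp d p φ) (hp : 0 < p) {j₀ j c₀ c : ℕ} (hj : j₀ ≤ j)
    (hc : c ≤ c₀) :
    φ j * (2 : ℝ) ^ (-((j : ℝ) * d) / p) * (c : ℝ) ^ (1 / p) ≤
      φ j₀ * (2 : ℝ) ^ (-((j₀ : ℝ) * d) / p) * (c₀ : ℝ) ^ (1 / p) := by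
  have hdecay : φ j * (2 : ℝ) ^ (-((j : ℝ) * d) / p) ≤ φ j₀ * (2 : ℝ) ^ (-((j₀ : ℝ) * d) / p) :=
    calc φ j * (2 : ℝ) ^ (-((j : ℝ) * d) / p)
        ≤ φ j₀ * (2 : ℝ) ^ (((j : ℝ) - j₀) * d / p) * (2 : ℝ) ^ (-((j : ℝ) * d) / p) := by
          gcongr
          exact (hGp.2 j₀ j hj).2
      _ = φ j₀ * (2 : ℝ) ^ (-((j₀ : ℝ) * d) / p) := by
          rw [mul_assoc, ← Real.rpow_add two_pos]
          ring_nf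
  gcongr
  exact mul_nonneg (hGp.1 j₀).le (by positivity)

lemma ofReal_mul_two_rpow_mul_natCast_rpow {a : ℝ} (ha : 0 ≤ a) (hp : 0 < p) (e : ℝ) (c : ℕ) :
    ENNReal.ofReal a * (2 : ℝ≥0∞) ^ e * (c : ℝ≥0∞) ^ (1 / p) =
      ENNReal.ofReal (a * (2 : ℝ) ^ e * (c : ℝ) ^ (1 / p)) := by
  rw [ENNReal.ofReal_mul (by positivity), ENNReal.ofReal_mul ha,
    ← ENNReal.ofReal_rpow_of_pos two_pos,
    ← ENNReal.ofReal_rpow_of_nonneg c.cast_nonneg (by positivity),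
    ENNReal.ofReal_ofNat, ENNReal.ofReal_natCast]

lemma localSum_le_card_rpow_mul_linftyNorm (hp : 0 < p) {j : ℕ} {m : Fin d → ℤ}
    {lam : (Fin d → ℤ) → ℂ} (s : Finset (Fin d → ℤ))
    (hs : ∀ k, inCube d j m k → lam k ≠ 0 → k ∈ s) :
    localSum d p j m lam ≤ (s.card : ℝ≥0∞) ^ (1 / p) * linftyNorm d lam := by
  classical
  have hsum : (∑' k : {k // inCube d j m k}, ENNReal.ofReal ‖lam k.1‖ ^ p) ≤
      s.card * linftyNorm d lam ^ p :=
    calc (∑' k : {k // inCube d j m k}, ENNReal.ofReal ‖lam k.1‖ ^ p)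
        = ∑ k ∈ s.subtype (inCube d j m), ENNReal.ofReal ‖lam k.1‖ ^ p := by
          refine tsum_eq_sum fun k hk => ?_
          have : lam k.1 = 0 := by_contra fun h => hk (Finset.mem_subtype.2 (hs k.1 k.2 h))
          simp [this, hp]
      _ ≤ ∑ _k ∈ s.subtype (inCube d j m), linftyNorm d lam ^ p := by
          gcongr with k
          exact le_iSup (fun k => ENNReal.ofReal ‖lam k‖) k.1
      _ ≤ s.card * linftyNorm d lam ^ p := by
          rw [Finset.sum_const, nsmul_eq_mul, Finset.card_subtype]
          gcongr
          exact Finset.filter_subset _ s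
  calc localSum d p j m lam ≤ ((s.card : ℝ≥0∞) * linftyNorm d lam ^ p) ^ (1 / p) :=
        ENNReal.rpow_le_rpow hsum (by positivity)
    _ = (s.card : ℝ≥0∞) ^ (1 / p) * linftyNorm d lam := by
        rw [ENNReal.mul_rpow_of_nonneg _ _ (by positivity), ← ENNReal.rpow_mul,
          mul_one_div_cancel hp.ne', ENNReal.rpow_one]

lemma mNorm_le_linftyNorm (hp : 0 < p) (hφ : ∀ j, 0 ≤ φ j) {lam : (Fin d → ℤ) → ℂ}
    (h : ∀ j m, ∃ s : Finset (Fin d → ℤ), (∀ k, inCube d j m k → lam k ≠ 0 → k ∈ s) ∧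
      φ j * (2 : ℝ) ^ (-((j : ℝ) * d) / p) * (s.card : ℝ) ^ (1 / p) ≤ 1) :
    mNorm d p φ lam ≤ linftyNorm d lam := by
  refine iSup₂_le fun j m => ?_
  obtain ⟨s, hs, hscale⟩ := h j m
  calc ENNReal.ofReal (φ j) * 2 ^ (-((j : ℝ) * d) / p) * localSum d p j m lam
      ≤ ENNReal.ofReal (φ j) * 2 ^ (-((j : ℝ) * d) / p) *
          ((s.card : ℝ≥0∞) ^ (1 / p) * linftyNorm d lam) := by
        gcongr
        exact localSum_le_card_rpow_mul_linftyNorm hp s hs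
    _ = ENNReal.ofReal (φ j * (2 : ℝ) ^ (-((j : ℝ) * d) / p) * (s.card : ℝ) ^ (1 / p)) *
          linftyNorm d lam := by
        rw [← ofReal_mul_two_rpow_mul_natCast_rpow (hφ j) hp, mul_assoc _ _ (linftyNorm d lam)]
    _ ≤ linftyNorm d lam := by
        simpa using mul_le_mul_of_nonneg_right (ENNReal.ofReal_le_one.2 hscale)
          (zero_le : 0 ≤ linftyNorm d lam)

lemma linftyNorm_le_mNorm (hp : 0 < p) (hφ0 : φ 0 = 1) (lam : (Fin d → ℤ) → ℂ) :
    linftyNorm d lam ≤ mNorm d p φ lam := by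
  refine iSup_le fun k => le_iSup₂_of_le 0 k ?_
  have hk : inCube d 0 k k := fun i => by simp
  calc ENNReal.ofReal ‖lam k‖ = (ENNReal.ofReal ‖lam k‖ ^ p) ^ (1 / p) := by
        rw [← ENNReal.rpow_mul, mul_one_div_cancel hp.ne', ENNReal.rpow_one]
    _ ≤ localSum d p 0 k lam :=
        ENNReal.rpow_le_rpow (ENNReal.le_tsum (f := fun k' : {k' // inCube d 0 k k'} =>
          ENNReal.ofReal ‖lam k'.1‖ ^ p) ⟨k, hk⟩) (by positivity)
    _ = _ := by simp [hφ0]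

end Morrey

section DyadicPoints

variable {d : ℕ} (i₀ : Fin d)

lemma le_of_inCube_single {j J : ℕ} {m : Fin d → ℤ}
    (h : inCube d j m (Pi.single i₀ (2 ^ J - 1))) (hm : m i₀ = 0) : J ≤ j := by
  have h2 := (h i₀).2
  simp only [Pi.single_eq_same, hm, zero_add, mul_one] at h2
  exact (pow_le_pow_iff_right₀ (one_lt_two : (1 : ℤ) < 2)).1 (by omega)

lemma eq_of_two_pow_mem_Ioc {a : ℤ} {J J' : ℕ} (h : (2 : ℤ) ^ J ∈ Set.Ioc a (2 * a))
    (h' : (2 : ℤ) ^ J' ∈ Set.Ioc a (2 * a)) : J = J' := by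
  have not_lt_of_mem : ∀ {J J' : ℕ}, (2 : ℤ) ^ J ∈ Set.Ioc a (2 * a) →
      (2 : ℤ) ^ J' ∈ Set.Ioc a (2 * a) → ¬ J < J' := fun h h' hlt => by
    have : (2 : ℤ) ^ (_ + 1) ≤ 2 ^ _ := pow_le_pow_right₀ one_le_two hlt
    rw [pow_succ] at this
    linarith [h.1, h'.2]
  exact le_antisymm (not_lt.1 (not_lt_of_mem h' h)) (not_lt.1 (not_lt_of_mem h h'))

lemma two_pow_mem_Ioc_of_inCube_single {j J : ℕ} {m : Fin d → ℤ} (hm : m i₀ ≠ 0)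
    (h : inCube d j m (Pi.single i₀ (2 ^ J - 1))) :
    (2 : ℤ) ^ J ∈ Set.Ioc (2 ^ j * m i₀) (2 * (2 ^ j * m i₀)) := by
  obtain ⟨h1, h2⟩ := h i₀
  simp only [Pi.single_eq_same] at h1 h2
  have hj : (0 : ℤ) < 2 ^ j := by positivity
  have hJ : (1 : ℤ) ≤ 2 ^ J := one_le_pow₀ one_le_two
  have hm1 : 1 ≤ m i₀ := by
    by_contra! hneg
    have : m i₀ + 1 ≤ 0 := by omega
    nlinarith
  constructor <;> nlinarith

lemma eq_of_inCube_single {j J J' : ℕ} {m : Fin d → ℤ} (hm : m i₀ ≠ 0)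
    (h : inCube d j m (Pi.single i₀ (2 ^ J - 1)))
    (h' : inCube d j m (Pi.single i₀ (2 ^ J' - 1))) : J = J' :=
  eq_of_two_pow_mem_Ioc (two_pow_mem_Ioc_of_inCube_single i₀ hm h)
    (two_pow_mem_Ioc_of_inCube_single i₀ hm h')

lemma exists_finset_inCube_single {J : ℕ → ℕ} (hJ : StrictMono J) (j : ℕ) (m : Fin d → ℤ) :
    ∃ s : Finset (Fin d → ℤ),
      (∀ n, inCube d j m (Pi.single i₀ (2 ^ J n - 1)) → Pi.single i₀ (2 ^ J n - 1) ∈ s) ∧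
      (s.card ≤ 1 ∨ ∃ n, J n ≤ j ∧ s.card ≤ n + 1) := by
  classical
  by_cases hm : m i₀ = 0
  · set A := (Finset.range (j + 1)).filter (fun n => J n ≤ j)
    refine ⟨A.image fun n => Pi.single i₀ (2 ^ J n - 1), fun n hn => ?_, ?_⟩
    · have hJn := le_of_inCube_single i₀ hn hm
      exact Finset.mem_image_of_mem _
        (Finset.mem_filter.2 ⟨Finset.mem_range.2 (by have : n ≤ J n := hJ.id_le n; omega), hJn⟩)
    rcases A.eq_empty_or_nonempty with hA | hA
    · simp [hA]
    refine Or.inr ⟨A.max' hA, (Finset.mem_filter.1 (A.max'_mem hA)).2, ?_⟩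
    calc _ ≤ A.card := Finset.card_image_le
      _ ≤ (Finset.range (A.max' hA + 1)).card :=
          Finset.card_le_card fun n hn => Finset.mem_range.2 (Nat.lt_succ_of_le (A.le_max' n hn))
      _ = A.max' hA + 1 := Finset.card_range _
  · by_cases hex : ∃ n, inCube d j m (Pi.single i₀ (2 ^ J n - 1))
    · obtain ⟨n₁, hn₁⟩ := hex
      refine ⟨{Pi.single i₀ (2 ^ J n₁ - 1)}, fun n hn => ?_, Or.inl (by simp)⟩
      rw [eq_of_inCube_single i₀ hm hn hn₁, Finset.mem_singleton]
    · exact ⟨∅, fun n hn => absurd ⟨n, hn⟩ hex, Or.inl (by simp)⟩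

end DyadicPoints

lemma linftyNorm_extend {d : ℕ} {x : ℕ → Fin d → ℤ} (hx : Function.Injective x) (μ : ℕ → ℂ) :
    linftyNorm d (Function.extend x μ 0) = ⨆ n, ENNReal.ofReal ‖μ n‖ := by
  refine le_antisymm (iSup_le fun k => ?_) (iSup_le fun n => le_iSup_of_le (x n) ?_)
  · by_cases hk : ∃ n, x n = k
    · obtain ⟨n, rfl⟩ := hk
      rw [hx.extend_apply]
      exact le_iSup (fun n => ENNReal.ofReal ‖μ n‖) n
    · simp [Function.extend_apply' _ _ _ hk]
  · rw [hx.extend_apply]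

lemma injective_single_two_pow_sub_one {d : ℕ} (i₀ : Fin d) {J : ℕ → ℕ}
    (hJ : Function.Injective J) :
    Function.Injective fun n => (Pi.single i₀ (2 ^ J n - 1) : Fin d → ℤ) := fun n n' h =>
  hJ (Nat.pow_right_injective le_rfl (by
    have := Pi.single_injective i₀ h
    simp only [sub_left_inj] at this
    exact_mod_cast this))

lemma mNorm_extend_single {d : ℕ} {p : ℝ} {φ : ℕ → ℝ} (i₀ : Fin d) (hp : 0 < p)
    (hGp : Gp d p φ) (hφ0 : φ 0 = 1) {J : ℕ → ℕ} (hJ : StrictMono J)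
    (hscale : ∀ n, φ (J n) * (2 : ℝ) ^ (-((J n : ℝ) * d) / p) * ((n : ℝ) + 1) ^ (1 / p) ≤ 1)
    (μ : ℕ → ℂ) :
    mNorm d p φ (Function.extend (fun n => Pi.single i₀ (2 ^ J n - 1)) μ 0) =
      ⨆ n, ENNReal.ofReal ‖μ n‖ := by
  have hx := injective_single_two_pow_sub_one i₀ hJ.injective
  rw [← linftyNorm_extend hx]
  refine le_antisymm (mNorm_le_linftyNorm hp (fun j => (hGp.1 j).le) fun j m => ?_)
    (linftyNorm_le_mNorm hp hφ0 _)
  obtain ⟨s, hs, hcard⟩ := exists_finset_inCube_single i₀ hJ j m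
  refine ⟨s, fun k hk hk0 => ?_, ?_⟩
  · by_cases hex : ∃ n, Pi.single i₀ (2 ^ J n - 1) = k
    · obtain ⟨n, rfl⟩ := hex
      exact hs n hk
    · exact absurd (Function.extend_apply' _ _ _ hex) hk0
  rcases hcard with hcard | ⟨n, hn, hcard⟩
  · simpa [hφ0] using hGp.mul_rpow_le hp (Nat.zero_le j) hcard
  · simpa using (hGp.mul_rpow_le hp hn hcard).trans (by exact_mod_cast hscale n)

lemma not_finite_range_comp_lcoeFun {R V : Type*} [Ring R] [StrongRankCondition R]
    [AddCommGroup V] [Module R V] {T : (ℕ → R) →ₗ[R] V} (hT : Function.Injective T) :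
    ¬ Module.Finite R (LinearMap.range (T ∘ₗ Finsupp.lcoeFun)) := fun hfin => by
  have hinj : Function.Injective (T ∘ₗ Finsupp.lcoeFun) := hT.comp DFunLike.coe_injective
  have := nontrivial_of_invariantBasisNumber R
  have hfin' := Module.Finite.equiv (LinearEquiv.ofInjective _ hinj).symm
  rw [Module.finite_finsupp_self_iff] at hfin'
  exact hfin'.elim (fun h => not_subsingleton R h) (fun _ => not_finite ℕ)

lemma iSup_ofReal_norm_lt_top {E : Type*} [SeminormedAddCommGroup E] (f : ℕ →₀ E) :
    ⨆ n, ENNReal.ofReal ‖f n‖ < ⊤ := by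
  refine lt_of_le_of_lt (b := ∑ i ∈ f.support, ENNReal.ofReal ‖f i‖) (iSup_le fun n => ?_)
    (ENNReal.sum_lt_top.2 fun _ _ => ENNReal.ofReal_lt_top)
  by_cases hn : n ∈ f.support
  · exact Finset.single_le_sum (f := fun i => ENNReal.ofReal ‖f i‖) (fun _ _ => zero_le) hn
  · simp [Finsupp.notMem_support_iff.1 hn]

theorem stmt_19_general (d : ℕ) (hd : 0 < d) (p₁ p₂ : ℝ) (hp₁ : 0 < p₁) (hp₂ : 0 < p₂)
    (φ₁ φ₂ : ℕ → ℝ) (hGp₁ : Gp d p₁ φ₁) (hGp₂ : Gp d p₂ φ₂)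
    (hφ₁1 : φ₁ 0 = 1) (hφ₂1 : φ₂ 0 = 1)
    (hlim₁ : Tendsto (fun k : ℕ => φ₁ k * (2 : ℝ) ^ (-((k : ℝ) * d) / p₁))
      atTop (nhds 0))
    (hlim₂ : Tendsto (fun k : ℕ => φ₂ k * (2 : ℝ) ^ (-((k : ℝ) * d) / p₂))
      atTop (nhds 0)) :
    (∃ T : (ℕ → ℂ) → ((Fin d → ℤ) → ℂ), IsLinearMap ℂ T ∧
      Function.Injective T ∧
      ∀ μ : ℕ → ℂ,
        mNorm d p₁ φ₁ (T μ) = (⨆ n : ℕ, ENNReal.ofReal ‖μ n‖) ∧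
        mNorm d p₂ φ₂ (T μ) = (⨆ n : ℕ, ENNReal.ofReal ‖μ n‖)) ∧
    ¬ (∀ X : Submodule ℂ ((Fin d → ℤ) → ℂ),
        (∀ x ∈ X, mNorm d p₁ φ₁ x < ⊤) → ¬ Module.Finite ℂ X →
        ∀ ε : ℝ≥0∞, 0 < ε →
          ∃ x ∈ X, mNorm d p₁ φ₁ x = 1 ∧ mNorm d p₂ φ₂ x < ε) := by
  have eventually_scale {p : ℝ} {φ : ℕ → ℝ}
      (hlim : Tendsto (fun k : ℕ => φ k * (2 : ℝ) ^ (-((k : ℝ) * d) / p)) atTop (nhds 0))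
      (n : ℕ) :
      ∀ᶠ k in atTop, φ k * (2 : ℝ) ^ (-((k : ℝ) * d) / p) * ((n : ℝ) + 1) ^ (1 / p) ≤ 1 :=
    ((hlim.mul_const _).eventually_lt_const (by simp)).mono fun _ => le_of_lt
  obtain ⟨J, hJ, hscale⟩ := extraction_forall_of_eventually fun n =>
    (eventually_scale hlim₁ n).and (eventually_scale hlim₂ n)
  set i₀ : Fin d := ⟨0, hd⟩
  set T := Function.ExtendByZero.linearMap ℂ fun n => (Pi.single i₀ (2 ^ J n - 1) : Fin d → ℤ)
  have hT := Function.extend_injective (injective_single_two_pow_sub_one i₀ hJ.injective)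
    (0 : (Fin d → ℤ) → ℂ)
  have hnorm₁ : ∀ μ, mNorm d p₁ φ₁ (T μ) = ⨆ n, ENNReal.ofReal ‖μ n‖ :=
    mNorm_extend_single i₀ hp₁ hGp₁ hφ₁1 hJ fun n => (hscale n).1
  have hnorm₂ : ∀ μ, mNorm d p₂ φ₂ (T μ) = ⨆ n, ENNReal.ofReal ‖μ n‖ :=
    mNorm_extend_single i₀ hp₂ hGp₂ hφ₂1 hJ fun n => (hscale n).2
  refine ⟨⟨T, T.isLinear, hT, fun μ => ⟨hnorm₁ μ, hnorm₂ μ⟩⟩, fun hsingular => ?_⟩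
  obtain ⟨_, ⟨f, rfl⟩, hf₁, hf₂⟩ := hsingular (LinearMap.range (T ∘ₗ Finsupp.lcoeFun))
    (by rintro _ ⟨f, rfl⟩; exact (hnorm₁ f).trans_lt (iSup_ofReal_norm_lt_top f))
    (not_finite_range_comp_lcoeFun hT) 1 one_pos
  rw [LinearMap.comp_apply, hnorm₁] at hf₁
  rw [LinearMap.comp_apply, hnorm₂, hf₁] at hf₂
  exact lt_irrefl 1 hf₂

theorem stmt_19 (d : ℕ) (hd : 0 < d) (p₁ p₂ : ℝ) (hp₁ : 0 < p₁) (hp₂ : 0 < p₂)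
    (φ₁ φ₂ : ℕ → ℝ) (hGp₁ : Gp d p₁ φ₁) (hGp₂ : Gp d p₂ φ₂)
    (hφ₁1 : φ₁ 0 = 1) (hφ₂1 : φ₂ 0 = 1)
    (hunb₁ : ∀ C : ℝ, ∃ k, C < φ₁ k) (hunb₂ : ∀ C : ℝ, ∃ k, C < φ₂ k)
    (hlim₁ : Tendsto (fun k : ℕ => φ₁ k * (2 : ℝ) ^ (-((k : ℝ) * d) / p₁))
      atTop (nhds 0))
    (hlim₂ : Tendsto (fun k : ℕ => φ₂ k * (2 : ℝ) ^ (-((k : ℝ) * d) / p₂))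
      atTop (nhds 0))
    (hemb : ∃ C : ℝ≥0∞, C < ⊤ ∧ ∀ lam : (Fin d → ℤ) → ℂ,
      mNorm d p₂ φ₂ lam ≤ C * mNorm d p₁ φ₁ lam) :
    (∃ T : (ℕ → ℂ) → ((Fin d → ℤ) → ℂ), IsLinearMap ℂ T ∧
      Function.Injective T ∧
      ∀ μ : ℕ → ℂ,
        mNorm d p₁ φ₁ (T μ) = (⨆ n : ℕ, ENNReal.ofReal ‖μ n‖) ∧
        mNorm d p₂ φ₂ (T μ) = (⨆ n : ℕ, ENNReal.ofReal ‖μ n‖)) ∧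
    ¬ (∀ X : Submodule ℂ ((Fin d → ℤ) → ℂ),
        (∀ x ∈ X, mNorm d p₁ φ₁ x < ⊤) → ¬ Module.Finite ℂ X →
        ∀ ε : ℝ≥0∞, 0 < ε →
          ∃ x ∈ X, mNorm d p₁ φ₁ x = 1 ∧ mNorm d p₂ φ₂ x < ε) :=
  stmt_19_general d hd p₁ p₂ hp₁ hp₂ φ₁ φ₂ hGp₁ hGp₂ hφ₁1 hφ₂1 hlim₁ hlim₂
end
end
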